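/- Let H be a Hopf algebra with bijective antipode S, and P an algebra with a right H-comodule algebra structure Δ_P : P → P ⊗ H. If g : H → P is a linear map satisfying g(1) = 1 and Δ_P(g(h)) = Σ g(h₂) ⊗ S(h₁)h₃ for all h ∈ H, and g is convolution invertible with inverse g⁻¹ (i.e., Σ g(h₁)g⁻¹(h₂) = Σ g⁻¹(h₁)g(h₂) = ε(h)1), then the map α : P → P defined by α(f) = Σ f₀ g(f₁) (where Δ_P(f) = Σ f₀ ⊗ f₁) is a bijective linear map satisfying Δ_P ∘ α = (α ⊗ id) ∘ Δ_P, with inverse f ↦ Σ f₀ g⁻¹(f₁). -/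

import Mathlib

open TensorProduct

variable {k : Type*} [Field k]
variable {H : Type*} [Ring H] [HopfAlgebra k H]
variable {P : Type*} [Ring P] [Algebra k P]

/-- Convolution product of two linear maps `H →ₗ[k] P`. -/
noncomputable def conv (f g : H →ₗ[k] P) : H →ₗ[k] P :=
  LinearMap.mul' k P ∘ₗ TensorProduct.map f g ∘ₗ Coalgebra.comul

/-- The unit of the convolution algebra: `h ↦ ε(h)·1`. -/
noncomputable def convUnit : H →ₗ[k] P :=
  Algebra.linearMap k P ∘ₗ Coalgebra.counit

/-- `ΔP` makes `P` a right `H`-comodule algebra (coaction axioms + algebra map). -/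
structure IsComodAlg (ΔP : P →ₗ[k] P ⊗[k] H) : Prop where
  coassoc : (TensorProduct.assoc k P H H).toLinearMap ∘ₗ
      (TensorProduct.map ΔP LinearMap.id) ∘ₗ ΔP
    = (TensorProduct.map LinearMap.id (Coalgebra.comul : H →ₗ[k] H ⊗[k] H)) ∘ₗ ΔP
  counit : (TensorProduct.rid k P).toLinearMap ∘ₗ
      (TensorProduct.map LinearMap.id (Coalgebra.counit : H →ₗ[k] k)) ∘ₗ ΔP
    = LinearMap.id
  map_mul : ∀ f g : P, ΔP (f * g) = ΔP f * ΔP g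
  map_one : ΔP 1 = 1

/-- The linear map `h ↦ Σ g(h₂) ⊗ S(h₁)h₃` on `H`. -/
noncomputable def adCoact (g : H →ₗ[k] P) : H →ₗ[k] P ⊗[k] H :=
  (TensorProduct.map g
      (LinearMap.mul' k H ∘ₗ
        TensorProduct.map (HopfAlgebra.antipode (R := k)) LinearMap.id)) ∘ₗ
    (TensorProduct.assoc k H H H).toLinearMap ∘ₗ
    (TensorProduct.map (TensorProduct.comm k H H).toLinearMap LinearMap.id) ∘ₗ
    (TensorProduct.map (Coalgebra.comul : H →ₗ[k] H ⊗[k] H) LinearMap.id) ∘ₗ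
    (Coalgebra.comul : H →ₗ[k] H ⊗[k] H)

/-- `α(f) = Σ f₀ · g(f₁)`. -/
noncomputable def act (ΔP : P →ₗ[k] P ⊗[k] H) (g : H →ₗ[k] P) : P →ₗ[k] P :=
  LinearMap.mul' k P ∘ₗ TensorProduct.map LinearMap.id g ∘ₗ ΔP

/-!
In the convolution algebra of linear maps `H → P ⊗ H`, `w = (h ↦ 1 ⊗ h)` is a unit with inverse
`h ↦ 1 ⊗ S h`, and the hypothesis on `g` reads `Δ_P ∘ g = w⁻¹ · ι(g) · w` with `ι(p) = p ⊗ 1`.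
For a comodule `M` the maps `M → B` form a right module over the convolution algebra `H → B`
via `(θ ⋆ c)(m) = Σ θ(m₀) c(m₁)`; here `α_g = id ⋆ g` and `Δ_P = ι ⋆ w`. As `Δ_P` is an algebra
map, `Δ_P ∘ α_g = Δ_P ⋆ (Δ_P ∘ g) = (ι ⋆ w) ⋆ (w⁻¹ ι(g) w) = ι(α_g) ⋆ w = (α_g ⊗ id) ∘ Δ_P`,
and then `α_{g'} ∘ α_g = α_g ⋆ g' = id ⋆ (g g') = id`. Since `a ↦ w⁻¹ ι(a) w` is multiplicative,
`Δ_P ∘ g'` and `w⁻¹ ι(g') w` are both inverse to `Δ_P ∘ g`, so the hypothesis passes to `g'` and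
gives the other composite.
-/

open WithConv

section CompConv

variable {R C A B : Type*} [CommSemiring R] [AddCommMonoid C] [Module R C] [Coalgebra R C]
  [Semiring A] [Algebra R A] [Semiring B] [Algebra R B]

noncomputable def AlgHom.compConvMonoidHom (φ : A →ₐ[R] B) :
    WithConv (C →ₗ[R] A) →* WithConv (C →ₗ[R] B) where
  toFun f := toConv (φ.toLinearMap ∘ₗ f.ofConv)
  map_one' := by ext; simp
  map_mul' f g := congrArg toConv (LinearMap.algHom_comp_convMul_distrib φ f g)

@[simp] lemma AlgHom.compConvMonoidHom_apply (φ : A →ₐ[R] B) (f : WithConv (C →ₗ[R] A)) :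
    φ.compConvMonoidHom f = toConv (φ.toLinearMap ∘ₗ f.ofConv) := rfl

end CompConv

section ConvAct

variable {R C M B : Type*} [CommSemiring R] [AddCommMonoid C] [Module R C]
  [AddCommMonoid M] [Module R M] [Semiring B] [Algebra R B]

noncomputable def convAct (ρ : M →ₗ[R] M ⊗[R] C) (θ : M →ₗ[R] B) (c : WithConv (C →ₗ[R] B)) :
    M →ₗ[R] B :=
  LinearMap.mul' R B ∘ₗ map θ c.ofConv ∘ₗ ρ

lemma convAct_mul [Coalgebra R C] {ρ : M →ₗ[R] M ⊗[R] C}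
    (hcoassoc : (TensorProduct.assoc R M C C).toLinearMap ∘ₗ map ρ LinearMap.id ∘ₗ ρ
      = map LinearMap.id (Coalgebra.comul : C →ₗ[R] C ⊗[R] C) ∘ₗ ρ)
    (θ : M →ₗ[R] B) (c d : WithConv (C →ₗ[R] B)) :
    convAct ρ θ (c * d) = convAct ρ (convAct ρ θ c) d := by
  have hmul : LinearMap.mul' R B ∘ₗ map θ (LinearMap.mul' R B ∘ₗ map c.ofConv d.ofConv) ∘ₗ
        (TensorProduct.assoc R M C C).toLinearMap
      = LinearMap.mul' R B ∘ₗ map (LinearMap.mul' R B ∘ₗ map θ c.ofConv) d.ofConv := by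
    ext m x y
    simp [mul_assoc]
  calc convAct ρ θ (c * d)
      = LinearMap.mul' R B ∘ₗ map θ (LinearMap.mul' R B ∘ₗ map c.ofConv d.ofConv) ∘ₗ
          map LinearMap.id Coalgebra.comul ∘ₗ ρ := by
        simp only [convAct, LinearMap.convMul_def, ofConv_toConv, ← LinearMap.comp_assoc,
          ← map_comp, LinearMap.comp_id]
    _ = LinearMap.mul' R B ∘ₗ map θ (LinearMap.mul' R B ∘ₗ map c.ofConv d.ofConv) ∘ₗ
          (TensorProduct.assoc R M C C).toLinearMap ∘ₗ map ρ LinearMap.id ∘ₗ ρ := by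
        rw [hcoassoc]
    _ = convAct ρ (convAct ρ θ c) d := by
        simp only [← LinearMap.comp_assoc] at hmul ⊢
        rw [hmul]
        simp only [convAct, LinearMap.comp_assoc, ← map_comp, LinearMap.comp_id]

lemma convAct_one [Coalgebra R C] {ρ : M →ₗ[R] M ⊗[R] C}
    (hcounit : (TensorProduct.rid R M).toLinearMap ∘ₗ
      map LinearMap.id (Coalgebra.counit : C →ₗ[R] R) ∘ₗ ρ = LinearMap.id)
    (θ : M →ₗ[R] B) : convAct ρ θ (1 : WithConv (C →ₗ[R] B)) = θ := by
  have hunit : LinearMap.mul' R B ∘ₗ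
        map θ (Algebra.linearMap R B ∘ₗ (Coalgebra.counit : C →ₗ[R] R))
      = θ ∘ₗ (TensorProduct.rid R M).toLinearMap ∘ₗ map LinearMap.id Coalgebra.counit := by
    ext m c
    simp [Algebra.smul_def, Algebra.commutes]
  rw [convAct, LinearMap.convOne_def, ofConv_toConv, ← LinearMap.comp_assoc, hunit,
    LinearMap.comp_assoc, LinearMap.comp_assoc, hcounit, LinearMap.comp_id]

lemma AlgHom.comp_convAct {B' : Type*} [Semiring B'] [Algebra R B'] (φ : B →ₐ[R] B')
    (ρ : M →ₗ[R] M ⊗[R] C) (θ : M →ₗ[R] B) (c : WithConv (C →ₗ[R] B)) :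
    φ.toLinearMap ∘ₗ convAct ρ θ c
      = convAct ρ (φ.toLinearMap ∘ₗ θ) (toConv (φ.toLinearMap ∘ₗ c.ofConv)) := by
  simp only [convAct, ← LinearMap.comp_assoc, AlgHom.comp_mul', map_comp]

lemma convAct_comp_of_comp_eq {M' : Type*} [AddCommMonoid M'] [Module R M']
    {ρ : M →ₗ[R] M ⊗[R] C} {ρ' : M' →ₗ[R] M' ⊗[R] C} {f : M' →ₗ[R] M}
    (hf : ρ ∘ₗ f = map f LinearMap.id ∘ₗ ρ') (θ : M →ₗ[R] B) (c : WithConv (C →ₗ[R] B)) :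
    convAct ρ θ c ∘ₗ f = convAct ρ' (θ ∘ₗ f) c := by
  simp only [convAct, LinearMap.comp_assoc, hf]
  rw [← LinearMap.comp_assoc ρ' (map f LinearMap.id) (map θ c.ofConv), ← map_comp,
    LinearMap.comp_id]

end ConvAct

section IncludeLeftRight

variable {R C M N : Type*} [CommSemiring R] [Semiring C] [Algebra R C]
  [AddCommMonoid M] [Module R M] [Semiring N] [Algebra R N]

lemma convAct_includeLeft_includeRight (ρ : M →ₗ[R] M ⊗[R] C) (θ : M →ₗ[R] N) :
    convAct ρ ((Algebra.TensorProduct.includeLeft : N →ₐ[R] N ⊗[R] C).toLinearMap ∘ₗ θ)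
      (toConv (Algebra.TensorProduct.includeRight : C →ₐ[R] N ⊗[R] C).toLinearMap)
      = map θ LinearMap.id ∘ₗ ρ := by
  rw [convAct, ← LinearMap.comp_assoc]
  congr 1
  ext m c
  simp

end IncludeLeftRight

section Hopf

open Algebra.TensorProduct (includeLeft includeRight)

variable (k H P) in
noncomputable def includeRightConvUnit : (WithConv (H →ₗ[k] P ⊗[k] H))ˣ where
  val := toConv (includeRight : H →ₐ[k] P ⊗[k] H).toLinearMap
  inv := toConv ((includeRight : H →ₐ[k] P ⊗[k] H).toLinearMap ∘ₗ HopfAlgebra.antipode k)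
  val_inv := by
    have h := congrArg (includeRight : H →ₐ[k] P ⊗[k] H).compConvMonoidHom
      (LinearMap.id_mul_antipode (R := k) (C := H))
    rwa [map_mul, map_one] at h
  inv_val := by
    have h := congrArg (includeRight : H →ₐ[k] P ⊗[k] H).compConvMonoidHom
      (LinearMap.antipode_mul_id (R := k) (C := H))
    rwa [map_mul, map_one] at h

lemma toConv_adCoact (a : H →ₗ[k] P) :
    toConv (adCoact a) = ↑(includeRightConvUnit k H P)⁻¹ *
      (includeLeft : P →ₐ[k] P ⊗[k] H).compConvMonoidHom (toConv a) *
      ↑(includeRightConvUnit k H P) := by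
  have key : map a (LinearMap.mul' k H ∘ₗ map (HopfAlgebra.antipode k) LinearMap.id) ∘ₗ
        (TensorProduct.assoc k H H H).toLinearMap ∘ₗ
        map (TensorProduct.comm k H H).toLinearMap LinearMap.id
      = LinearMap.mul' k (P ⊗[k] H) ∘ₗ map (LinearMap.mul' k (P ⊗[k] H) ∘ₗ
          map ((includeRight : H →ₐ[k] P ⊗[k] H).toLinearMap ∘ₗ HopfAlgebra.antipode k)
            ((includeLeft : P →ₐ[k] P ⊗[k] H).toLinearMap ∘ₗ a))
          (includeRight : H →ₐ[k] P ⊗[k] H).toLinearMap := by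
    apply TensorProduct.ext_threefold
    intro x y z
    simp
  apply ofConv_injective
  simp only [adCoact, LinearMap.convMul_def, ofConv_toConv, includeRightConvUnit,
    AlgHom.compConvMonoidHom_apply, ← Units.inv_eq_val_inv]
  simp only [← LinearMap.comp_assoc] at key ⊢
  rw [key]
  simp only [LinearMap.comp_assoc, ← LinearMap.rTensor_def, LinearMap.map_comp_rTensor]

lemma act_eq_convAct (ΔP : P →ₗ[k] P ⊗[k] H) (a : H →ₗ[k] P) :
    act ΔP a = convAct ΔP LinearMap.id (toConv a) := rfl

lemma toConv_conv (a b : H →ₗ[k] P) : toConv (conv a b) = toConv a * toConv b := rfl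

lemma toConv_convUnit : toConv (convUnit : H →ₗ[k] P) = 1 := rfl

noncomputable def IsComodAlg.algHom {ΔP : P →ₗ[k] P ⊗[k] H} (hP : IsComodAlg ΔP) :
    P →ₐ[k] P ⊗[k] H :=
  AlgHom.ofLinearMap ΔP hP.map_one hP.map_mul

lemma comp_eq_adCoact_of_conv_eq_convUnit {ΔP : P →ₗ[k] P ⊗[k] H} (hP : IsComodAlg ΔP)
    {a b : H →ₗ[k] P} (ha : ΔP ∘ₗ a = adCoact a) (hab : conv a b = convUnit)
    (hba : conv b a = convUnit) : ΔP ∘ₗ b = adCoact b := by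
  have hba_adCoact : toConv (adCoact b) * toConv (adCoact a) = 1 := by
    calc toConv (adCoact b) * toConv (adCoact a)
        = ↑(includeRightConvUnit k H P)⁻¹ *
            (includeLeft : P →ₐ[k] P ⊗[k] H).compConvMonoidHom (toConv (conv b a)) *
            ↑(includeRightConvUnit k H P) := by
          simp only [toConv_adCoact, toConv_conv, map_mul, mul_assoc, Units.mul_inv_cancel_left]
      _ = 1 := by rw [hba, toConv_convUnit, map_one, mul_one, Units.inv_mul]
  have hab_comp : toConv (ΔP ∘ₗ a) * toConv (ΔP ∘ₗ b) = 1 := by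
    have h := congrArg hP.algHom.compConvMonoidHom (toConv_conv a b)
    rwa [map_mul, hab, toConv_convUnit, map_one, eq_comm] at h
  rw [ha] at hab_comp
  exact toConv_injective (left_inv_eq_right_inv hba_adCoact hab_comp).symm

lemma comp_act_eq_of_comp_eq_adCoact {ΔP : P →ₗ[k] P ⊗[k] H} (hP : IsComodAlg ΔP)
    {a : H →ₗ[k] P} (ha : ΔP ∘ₗ a = adCoact a) :
    ΔP ∘ₗ act ΔP a = map (act ΔP a) LinearMap.id ∘ₗ ΔP := by
  set w := includeRightConvUnit k H P
  set ι : P →ₐ[k] P ⊗[k] H := includeLeft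
  have hΔP : convAct ΔP ι.toLinearMap ↑w = ΔP := by
    have h := convAct_includeLeft_includeRight ΔP (LinearMap.id : P →ₗ[k] P)
    rwa [TensorProduct.map_id, LinearMap.id_comp] at h
  calc ΔP ∘ₗ act ΔP a
      = convAct ΔP ΔP (toConv (ΔP ∘ₗ a)) := hP.algHom.comp_convAct ΔP _ _
    _ = convAct ΔP (convAct ΔP ι.toLinearMap ↑w)
          (↑w⁻¹ * ι.compConvMonoidHom (toConv a) * ↑w) := by
        rw [hΔP, ← toConv_adCoact, ha]
    _ = convAct ΔP ι.toLinearMap (ι.compConvMonoidHom (toConv a) * ↑w) := by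
        rw [← convAct_mul hP.coassoc, ← mul_assoc, ← mul_assoc, Units.mul_inv, one_mul]
    _ = convAct ΔP (ι.toLinearMap ∘ₗ act ΔP a) ↑w := by
        rw [convAct_mul hP.coassoc, act_eq_convAct, ι.comp_convAct]
        rfl
    _ = map (act ΔP a) LinearMap.id ∘ₗ ΔP := convAct_includeLeft_includeRight ΔP _

lemma act_comp_act_eq_id_of_conv_eq_convUnit {ΔP : P →ₗ[k] P ⊗[k] H} (hP : IsComodAlg ΔP)
    {a b : H →ₗ[k] P} (ha : ΔP ∘ₗ act ΔP a = map (act ΔP a) LinearMap.id ∘ₗ ΔP)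
    (hab : conv a b = convUnit) : act ΔP b ∘ₗ act ΔP a = LinearMap.id :=
  calc act ΔP b ∘ₗ act ΔP a
      = convAct ΔP (convAct ΔP LinearMap.id (toConv a)) (toConv b) :=
        convAct_comp_of_comp_eq ha _ _
    _ = convAct ΔP LinearMap.id (toConv (conv a b)) := (convAct_mul hP.coassoc _ _ _).symm
    _ = LinearMap.id := by rw [hab, toConv_convUnit, convAct_one hP.counit]

end Hopf

theorem statement_6 (ΔP : P →ₗ[k] P ⊗[k] H) (hP : IsComodAlg ΔP)
    (g g' : H →ₗ[k] P)
    (hgcoact : ΔP ∘ₗ g = adCoact g)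
    (hinv : conv g g' = (convUnit : H →ₗ[k] P) ∧
            conv g' g = (convUnit : H →ₗ[k] P)) :
    Function.Bijective (act ΔP g) ∧
    act ΔP g ∘ₗ act ΔP g' = LinearMap.id ∧
    act ΔP g' ∘ₗ act ΔP g = LinearMap.id ∧
    ΔP ∘ₗ act ΔP g = (TensorProduct.map (act ΔP g) LinearMap.id) ∘ₗ ΔP := by
  obtain ⟨hgg', hg'g⟩ := hinv
  have hg'coact : ΔP ∘ₗ g' = adCoact g' :=
    comp_eq_adCoact_of_conv_eq_convUnit hP hgcoact hgg' hg'g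
  have hg := comp_act_eq_of_comp_eq_adCoact hP hgcoact
  have hg' := comp_act_eq_of_comp_eq_adCoact hP hg'coact
  have hleft := act_comp_act_eq_id_of_conv_eq_convUnit hP hg hgg'
  have hright := act_comp_act_eq_id_of_conv_eq_convUnit hP hg' hg'g
  refine ⟨Function.bijective_iff_has_inverse.mpr ⟨act ΔP g', ?_, ?_⟩, hright, hleft, hg⟩
  exacts [LinearMap.congr_fun hleft, LinearMap.congr_fun hright]
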